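/- arXiv:2202.05801 — 2 statements merged into one kernel-verified Lean document; each statement's English description precedes it below -/
import Mathlib

section
/- Fix an oriented line L ⊂ ℝ^d with orthogonal projection q: ℝ^d → L, and for j ∈ {0,…,2n}, t ∈ {1,…,m} let A_{j,t} ⊂ 𝒞 = F(ℝ^d, n+m) ×_{F(ℝ^d,m)} F(ℝ^d, n+m) be the set of configurations C = (z_1,…,z_n, z'_1,…,z'_n, o_1,…,o_m) such that the set of projection points {q(z_i), q(z'_i), q(o_j)} has cardinality j + t and the set {q(o_1),…,q(o_m)} has cardinality t. Then the closure of A_{j,t} in 𝒞 is contained in the union of the sets A_{j',t'} over j' ≤ j and t' ≤ t; consequently, for each c, every set A_{j,t} with j + t = c is both open and closed in W_c = ∪_{j+t=c} A_{j,t}. -/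
open scoped RealInnerProductSpace

/-- The ambient space of configurations `(z₁, …, z_n, z'₁, …, z'_n, o₁, …, o_m)`
of `n` initial robots, `n` desired robots and `m` obstacles in `ℝ^d`. -/
abbrev ConfigVec (d n m : ℕ) : Type :=
  (Fin n → EuclideanSpace ℝ (Fin d)) × (Fin n → EuclideanSpace ℝ (Fin d)) ×
    (Fin m → EuclideanSpace ℝ (Fin d))

/-- The space `𝒞 = E ×_B E` of the Fadell–Neuwirth fibration: both
`(z₁, …, z_n, o₁, …, o_m)` and `(z'₁, …, z'_n, o₁, …, o_m)` consist of pairwise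
distinct points. -/
def ConfigSpace (d n m : ℕ) : Set (ConfigVec d n m) :=
  {v | Function.Injective (Sum.elim v.1 v.2.2) ∧ Function.Injective (Sum.elim v.2.1 v.2.2)}

/-- The list of the `2n + m` projections `q(z_i), q(z'_i), q(o_j)` of a configuration
onto the oriented line with unit direction `e` (identified with `ℝ`, preserving order). -/
noncomputable def allProj {d n m : ℕ} (e : EuclideanSpace ℝ (Fin d)) (v : ConfigVec d n m) :
    Fin n ⊕ Fin n ⊕ Fin m → ℝ :=
  Sum.elim (fun i => ⟪v.1 i, e⟫)
    (Sum.elim (fun i => ⟪v.2.1 i, e⟫) (fun j => ⟪v.2.2 j, e⟫))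

/-- The subset `A_{j,t} ⊆ 𝒞`: configurations whose set of projection points has
cardinality `j + t` and whose set of projected obstacles has cardinality `t`. -/
noncomputable def stratum (d n m : ℕ) (e : EuclideanSpace ℝ (Fin d)) (j t : ℕ) :
    Set ↥(ConfigSpace d n m) :=
  {v | (Set.range (allProj e (v : ConfigVec d n m))).ncard = j + t ∧
    (Set.range fun k : Fin m => ⟪(v : ConfigVec d n m).2.2 k, e⟫).ncard = t}

/-- The set `W_c = ⋃_{j+t=c} A_{j,t}` (with `0 ≤ j ≤ 2n`, `1 ≤ t ≤ m`). -/
noncomputable def aggregate (d n m : ℕ) (e : EuclideanSpace ℝ (Fin d)) (c : ℕ) :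
    Set ↥(ConfigSpace d n m) :=
  ⋃ (j : ℕ) (t : ℕ) (_ : j + t = c ∧ j ≤ 2 * n ∧ 1 ≤ t ∧ t ≤ m), stratum d n m e j t

/-!
Let `t(C)` (`obstacleCount`) be the number of projected obstacle points and `j(C)`
(`robotCount`) the number of the remaining projection points, so that
`A_{j,t} = {j(C) = j, t(C) = t}`. Both counts are lower semicontinuous on `𝒞`: points with
distinct projections keep distinct projections nearby, so the counts can only drop in a limit.
Hence `{j(C) ≤ j, t(C) ≤ t}` is a closed set containing `A_{j,t}`. On `W_c` we have
`j(C) + t(C) = c`, so there `A_{j,t}` is both the closed set `{j(C) ≤ j, t(C) ≤ t}` and the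
open set `{j(C) ≥ j, t(C) ≥ t}`.
-/

open Set Filter Topology

section RangeCount

variable {X Y : Type*} [TopologicalSpace X] [TopologicalSpace Y] [T2Space Y]
  {α β : Type*} [Finite α] [Finite β]

lemma isOpen_setOf_forall_ne (p : α → β → Prop) {f : X → α → Y} {g : X → β → Y}
    (hf : ∀ a, Continuous fun x => f x a) (hg : ∀ b, Continuous fun x => g x b) :
    IsOpen {x | ∀ a b, p a b → f x a ≠ g x b} := by
  simp only [ofPred_forall]
  refine isOpen_iInter_of_finite fun a => isOpen_iInter_of_finite fun b =>
    isOpen_iInter_of_finite fun _ => isOpen_ne_fun (hf a) (hg b)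

lemma eventually_ncard_range_diff_le {f : X → α → Y} {g : X → β → Y}
    (hf : ∀ a, Continuous fun x => f x a) (hg : ∀ b, Continuous fun x => g x b) (x₀ : X) :
    ∀ᶠ x in 𝓝 x₀, (range (f x₀) \ range (g x₀)).ncard ≤ (range (f x) \ range (g x)).ncard := by
  have hsurj : SurjOn (f x₀) {a | f x₀ a ∉ range (g x₀)} (range (f x₀) \ range (g x₀)) := by
    rintro _ ⟨⟨a, rfl⟩, ha⟩
    exact ⟨a, ha, rfl⟩
  obtain ⟨I, hIsub, hIinj, hIimg⟩ := hsurj.exists_subset_injOn_image_eq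
  let U := {x | ∀ a a', (a ∈ I ∧ a' ∈ I ∧ a ≠ a') → f x a ≠ f x a'} ∩
    {x | ∀ a b, a ∈ I → f x a ≠ g x b}
  have hU : IsOpen U :=
    (isOpen_setOf_forall_ne _ hf hf).inter (isOpen_setOf_forall_ne _ hf hg)
  have hx₀ : x₀ ∈ U :=
    ⟨fun a a' ⟨ha, ha', hne⟩ heq => hne (hIinj ha ha' heq),
      fun a b ha heq => hIsub ha ⟨b, heq.symm⟩⟩
  filter_upwards [hU.mem_nhds hx₀] with x ⟨hinj, hdisj⟩
  have hinjOn : InjOn (f x) I := fun a ha a' ha' heq => by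
    by_contra hne
    exact hinj a a' ⟨ha, ha', hne⟩ heq
  have himg : f x '' I ⊆ range (f x) \ range (g x) := by
    rintro _ ⟨a, ha, rfl⟩
    exact ⟨⟨a, rfl⟩, fun ⟨b, hb⟩ => hdisj a b ha hb.symm⟩
  calc (range (f x₀) \ range (g x₀)).ncard = I.ncard := by rw [← hIimg, hIinj.ncard_image]
    _ = (f x '' I).ncard := hinjOn.ncard_image.symm
    _ ≤ (range (f x) \ range (g x)).ncard := ncard_le_ncard himg (finite_range _).sdiff

lemma lowerSemicontinuous_ncard_range_diff {f : X → α → Y} {g : X → β → Y}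
    (hf : ∀ a, Continuous fun x => f x a) (hg : ∀ b, Continuous fun x => g x b) :
    LowerSemicontinuous fun x => (range (f x) \ range (g x)).ncard := fun x₀ _ hlt =>
  (eventually_ncard_range_diff_le hf hg x₀).mono fun _ hle => hlt.trans_le hle

lemma lowerSemicontinuous_ncard_range {f : X → α → Y} (hf : ∀ a, Continuous fun x => f x a) :
    LowerSemicontinuous fun x => (range (f x)).ncard := by
  simpa only [range_eq_empty, sdiff_empty] using
    lowerSemicontinuous_ncard_range_diff hf (g := fun _ => (Empty.elim : Empty → Y))
      (fun b => b.elim)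

end RangeCount

lemma LowerSemicontinuous.isOpen_setOf_le {X : Type*} [TopologicalSpace X] {g : X → ℕ}
    (hg : LowerSemicontinuous g) (k : ℕ) : IsOpen {x | k ≤ g x} := by
  cases k with
  | zero => simp
  | succ k => exact hg.isOpen_preimage k

section Configurations

variable {d n m : ℕ} (e : EuclideanSpace ℝ (Fin d))

noncomputable def obstacleProj (v : ConfigVec d n m) : Fin m → ℝ := fun k => ⟪v.2.2 k, e⟫

noncomputable def robotCount (v : ConfigVec d n m) : ℕ :=
  (range (allProj e v) \ range (obstacleProj e v)).ncard

noncomputable def obstacleCount (v : ConfigVec d n m) : ℕ :=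
  (range (obstacleProj e v)).ncard

lemma ncard_range_allProj (v : ConfigVec d n m) :
    (range (allProj e v)).ncard = robotCount e v + obstacleCount e v := by
  have hsub : range (obstacleProj e v) ⊆ range (allProj e v) := by
    rintro _ ⟨k, rfl⟩
    exact ⟨Sum.inr (Sum.inr k), rfl⟩
  exact (ncard_sdiff_add_ncard_of_subset hsub).symm

lemma mem_stratum_iff {j t : ℕ} {v : ConfigSpace d n m} :
    v ∈ stratum d n m e j t ↔ robotCount e v.1 = j ∧ obstacleCount e v.1 = t := by
  change (range (allProj e v.1)).ncard = j + t ∧ obstacleCount e v.1 = t ↔ _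
  rw [ncard_range_allProj]
  omega

lemma continuous_allProj_apply (i : Fin n ⊕ Fin n ⊕ Fin m) :
    Continuous fun v : ConfigVec d n m => allProj e v i := by
  rcases i with i | i | i <;> simp only [allProj, Sum.elim_inl, Sum.elim_inr] <;> fun_prop

lemma lowerSemicontinuous_robotCount :
    LowerSemicontinuous fun v : ConfigSpace d n m => robotCount e v.1 :=
  lowerSemicontinuous_ncard_range_diff
    (fun i => (continuous_allProj_apply e i).comp continuous_subtype_val)
    (fun k => (continuous_allProj_apply e (Sum.inr (Sum.inr k))).comp continuous_subtype_val)

lemma lowerSemicontinuous_obstacleCount :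
    LowerSemicontinuous fun v : ConfigSpace d n m => obstacleCount e v.1 :=
  lowerSemicontinuous_ncard_range
    (fun k => (continuous_allProj_apply e (Sum.inr (Sum.inr k))).comp continuous_subtype_val)

lemma isClosed_setOf_counts_le (j t : ℕ) :
    IsClosed {v : ConfigSpace d n m | robotCount e v.1 ≤ j ∧ obstacleCount e v.1 ≤ t} :=
  ((lowerSemicontinuous_robotCount e).isClosed_preimage j).inter
    ((lowerSemicontinuous_obstacleCount e).isClosed_preimage t)

lemma isOpen_setOf_le_counts (j t : ℕ) :
    IsOpen {v : ConfigSpace d n m | j ≤ robotCount e v.1 ∧ t ≤ obstacleCount e v.1} :=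
  ((lowerSemicontinuous_robotCount e).isOpen_setOf_le j).inter
    ((lowerSemicontinuous_obstacleCount e).isOpen_setOf_le t)

lemma closure_stratum_subset_setOf_counts_le (j t : ℕ) :
    closure (stratum d n m e j t) ⊆ {v | robotCount e v.1 ≤ j ∧ obstacleCount e v.1 ≤ t} :=
  closure_minimal (fun _ hv => (mem_stratum_iff e).1 hv |>.imp le_of_eq le_of_eq)
    (isClosed_setOf_counts_le e j t)

lemma counts_add_of_mem_aggregate {c : ℕ} {v : ConfigSpace d n m}
    (hv : v ∈ aggregate d n m e c) : robotCount e v.1 + obstacleCount e v.1 = c := by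
  simp only [aggregate, mem_iUnion] at hv
  obtain ⟨j, t, ⟨hc, -⟩, hjt⟩ := hv
  obtain ⟨rfl, rfl⟩ := (mem_stratum_iff e).1 hjt
  exact hc

lemma preimage_stratum_aggregate_eq_setOf_counts_le {c j t : ℕ} (hc : j + t = c) :
    (Subtype.val ⁻¹' stratum d n m e j t : Set (aggregate d n m e c)) =
      Subtype.val ⁻¹' {v | robotCount e v.1 ≤ j ∧ obstacleCount e v.1 ≤ t} := by
  ext ⟨v, hv⟩
  have := counts_add_of_mem_aggregate e hv
  simp only [mem_preimage, mem_ofPred_eq, mem_stratum_iff]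
  omega

lemma preimage_stratum_aggregate_eq_setOf_le_counts {c j t : ℕ} (hc : j + t = c) :
    (Subtype.val ⁻¹' stratum d n m e j t : Set (aggregate d n m e c)) =
      Subtype.val ⁻¹' {v | j ≤ robotCount e v.1 ∧ t ≤ obstacleCount e v.1} := by
  ext ⟨v, hv⟩
  have := counts_add_of_mem_aggregate e hv
  simp only [mem_preimage, mem_ofPred_eq, mem_stratum_iff]
  omega

end Configurations

theorem closure_stratum_subset_general (d n m : ℕ)
    (e : EuclideanSpace ℝ (Fin d)) :
    (∀ j t : ℕ, j ≤ 2 * n → 1 ≤ t → t ≤ m →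
      closure (stratum d n m e j t) ⊆
        ⋃ (j' : ℕ) (t' : ℕ) (_ : j' ≤ j ∧ t' ≤ t), stratum d n m e j' t') ∧
    (∀ c j t : ℕ, j + t = c → j ≤ 2 * n → 1 ≤ t → t ≤ m →
      IsOpen (Subtype.val ⁻¹' (stratum d n m e j t) : Set ↥(aggregate d n m e c)) ∧
      IsClosed (Subtype.val ⁻¹' (stratum d n m e j t) : Set ↥(aggregate d n m e c))) := by
  refine ⟨fun j t _ _ _ v hv => ?_, fun c j t hc _ _ _ => ⟨?_, ?_⟩⟩
  · obtain ⟨hj, ht⟩ := closure_stratum_subset_setOf_counts_le e j t hv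
    exact mem_iUnion₂.2 ⟨robotCount e v.1, obstacleCount e v.1,
      mem_iUnion.2 ⟨⟨hj, ht⟩, (mem_stratum_iff e).2 ⟨rfl, rfl⟩⟩⟩
  · rw [preimage_stratum_aggregate_eq_setOf_le_counts e hc]
    exact (isOpen_setOf_le_counts e j t).preimage continuous_subtype_val
  · rw [preimage_stratum_aggregate_eq_setOf_counts_le e hc]
    exact (isClosed_setOf_counts_le e j t).preimage continuous_subtype_val

/-- **Statement 12.** The closure (in `𝒞`) of the stratum `A_{j,t}` is contained in the
union of the strata `A_{j',t'}` over `j' ≤ j` and `t' ≤ t`; consequently each `A_{j,t}`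
with `j + t = c` is both open and closed in `W_c = ⋃_{j+t=c} A_{j,t}`. -/
theorem closure_stratum_subset (d n m : ℕ) (hd : 2 ≤ d)
    (e : EuclideanSpace ℝ (Fin d)) (he : ‖e‖ = 1) :
    (∀ j t : ℕ, j ≤ 2 * n → 1 ≤ t → t ≤ m →
      closure (stratum d n m e j t) ⊆
        ⋃ (j' : ℕ) (t' : ℕ) (_ : j' ≤ j ∧ t' ≤ t), stratum d n m e j' t') ∧
    (∀ c j t : ℕ, j + t = c → j ≤ 2 * n → 1 ≤ t → t ≤ m →
      IsOpen (Subtype.val ⁻¹' (stratum d n m e j t) : Set ↥(aggregate d n m e c)) ∧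
      IsClosed (Subtype.val ⁻¹' (stratum d n m e j t) : Set ↥(aggregate d n m e c))) :=
  closure_stratum_subset_general d n m e
end

section
/- Let L ⊂ ℝ^d be an oriented line with orthogonal projection q: ℝ^d → L, and let z_1,…,z_n, z'_1,…,z'_n, o_1,…,o_m ∈ ℝ^d be points such that the projections q(z_1),…,q(z_n), q(o_1),…,q(o_m) are pairwise distinct, the projections q(z'_1),…,q(z'_n), q(o_1),…,q(o_m) are pairwise distinct, and the two lists have the same relative ordering on L (that is, for i ≠ j, q(z_i) < q(z_j) iff q(z'_i) < q(z'_j), and for all i, ℓ, q(z_i) < q(o_ℓ) iff q(z'_i) < q(o_ℓ)). Then the straight-line homotopy z_i(t) = (1−t)z_i + t z'_i, t ∈ [0,1], satisfies: for every t ∈ [0,1], the points z_1(t),…,z_n(t), o_1,…,o_m are pairwise distinct. In particular the affine deformation defines a collision-free motion of the n robots from (z_1,…,z_n) to (z'_1,…,z'_n) avoiding the obstacles o_1,…,o_m. -/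
/-! The projection of the moving point `zᵢ(t)` onto the line is the convex combination
`(1 - t) q(zᵢ) + t q(z'ᵢ)`, and the obstacles' projections are trivially such combinations too.
A convex combination of two equally ordered lists preserves strict order, so the projections stay
pairwise distinct for every `t`, and then so do the points themselves. -/

open scoped RealInnerProductSpace

section ConvexCombination

variable {𝕜 : Type*} [Field 𝕜] [LinearOrder 𝕜] [IsStrictOrderedRing 𝕜]

theorem convex_combination_lt_convex_combination {a b a' b' t : 𝕜} (ht : t ∈ Set.Icc (0 : 𝕜) 1)
    (h : a < b) (h' : a' < b') : (1 - t) * a + t * a' < (1 - t) * b + t * b' := by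
  obtain ⟨ht0, ht1⟩ := ht
  rcases ht0.lt_or_eq with ht0 | rfl
  · have := mul_le_mul_of_nonneg_left h.le (sub_nonneg.2 ht1)
    have := mul_lt_mul_of_pos_left h' ht0
    linarith
  · simpa using h

theorem Function.Injective.convex_combination_of_lt_imp_lt {ι : Type*} {f g : ι → 𝕜}
    (hf : Function.Injective f) (hfg : ∀ a b, f a < f b → g a < g b) {t : 𝕜}
    (ht : t ∈ Set.Icc (0 : 𝕜) 1) : Function.Injective fun a => (1 - t) * f a + t * g a := by
  intro a b hab
  by_contra hne
  rcases (hf.ne hne).lt_or_gt with h | h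
  · exact (convex_combination_lt_convex_combination ht h (hfg a b h)).ne hab
  · exact (convex_combination_lt_convex_combination ht h (hfg b a h)).ne hab.symm

end ConvexCombination

theorem straight_line_homotopy_collision_free_general
    (d n m : ℕ) (e : EuclideanSpace ℝ (Fin d))
    (z z' : Fin n → EuclideanSpace ℝ (Fin d)) (o : Fin m → EuclideanSpace ℝ (Fin d))
    (h₁ : Function.Injective
      (Sum.elim (fun i => ⟪z i, e⟫) (fun ℓ => ⟪o ℓ, e⟫) : Fin n ⊕ Fin m → ℝ))
    (horder : ∀ a b : Fin n ⊕ Fin m,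
      (Sum.elim (fun i => ⟪z i, e⟫) (fun ℓ => ⟪o ℓ, e⟫) a <
        Sum.elim (fun i => ⟪z i, e⟫) (fun ℓ => ⟪o ℓ, e⟫) b) ↔
      (Sum.elim (fun i => ⟪z' i, e⟫) (fun ℓ => ⟪o ℓ, e⟫) a <
        Sum.elim (fun i => ⟪z' i, e⟫) (fun ℓ => ⟪o ℓ, e⟫) b)) :
    ∀ t ∈ Set.Icc (0 : ℝ) 1,
      Function.Injective
        (Sum.elim (fun i => (1 - t) • z i + t • z' i) o : Fin n ⊕ Fin m → EuclideanSpace ℝ (Fin d)) := by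
  intro t ht
  have hproj : (fun x => ⟪x, e⟫) ∘ Sum.elim (fun i => (1 - t) • z i + t • z' i) o =
      fun a => (1 - t) * Sum.elim (fun i => ⟪z i, e⟫) (fun ℓ => ⟪o ℓ, e⟫) a +
        t * Sum.elim (fun i => ⟪z' i, e⟫) (fun ℓ => ⟪o ℓ, e⟫) a := by
    funext a
    rcases a with i | ℓ
    · simp [inner_add_left, real_inner_smul_left]
    · simp only [Function.comp_apply, Sum.elim_inr]
      ring
  apply Function.Injective.of_comp (f := fun x => ⟪x, e⟫)
  rw [hproj]
  exact h₁.convex_combination_of_lt_imp_lt (fun a b => (horder a b).1) ht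

/-- **Statement 13.** Let `L ⊂ ℝ^d` be an oriented line, identified via its unit direction
vector `e`, so that the orthogonal projection to `L` corresponds (in an order-preserving way)
to the map `x ↦ ⟪x, e⟫`. Suppose the projections of the initial robots `z i` together with the
obstacles `o ℓ` are pairwise distinct, the projections of the desired robots `z' i` together
with the obstacles are pairwise distinct, and the two lists occur in the same relative order.
Then the straight-line homotopy `zᵢ(t) = (1 - t) zᵢ + t z'ᵢ` is collision-free: for each
`t ∈ [0,1]` the points `z₁(t), …, z_n(t), o₁, …, o_m` are pairwise distinct. -/
theorem straight_line_homotopy_collision_free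
    (d n m : ℕ) (e : EuclideanSpace ℝ (Fin d)) (he : ‖e‖ = 1)
    (z z' : Fin n → EuclideanSpace ℝ (Fin d)) (o : Fin m → EuclideanSpace ℝ (Fin d))
    (h₁ : Function.Injective
      (Sum.elim (fun i => ⟪z i, e⟫) (fun ℓ => ⟪o ℓ, e⟫) : Fin n ⊕ Fin m → ℝ))
    (h₂ : Function.Injective
      (Sum.elim (fun i => ⟪z' i, e⟫) (fun ℓ => ⟪o ℓ, e⟫) : Fin n ⊕ Fin m → ℝ))
    (horder : ∀ a b : Fin n ⊕ Fin m,
      (Sum.elim (fun i => ⟪z i, e⟫) (fun ℓ => ⟪o ℓ, e⟫) a <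
        Sum.elim (fun i => ⟪z i, e⟫) (fun ℓ => ⟪o ℓ, e⟫) b) ↔
      (Sum.elim (fun i => ⟪z' i, e⟫) (fun ℓ => ⟪o ℓ, e⟫) a <
        Sum.elim (fun i => ⟪z' i, e⟫) (fun ℓ => ⟪o ℓ, e⟫) b)) :
    ∀ t ∈ Set.Icc (0 : ℝ) 1,
      Function.Injective
        (Sum.elim (fun i => (1 - t) • z i + t • z' i) o : Fin n ⊕ Fin m → EuclideanSpace ℝ (Fin d)) :=
  straight_line_homotopy_collision_free_general d n m e z z' o h₁ horder
end
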